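/- arXiv:math/0405008 — 3 statements merged into one kernel-verified Lean document; each statement's English description precedes it below -/
import Mathlib

section
/- Fix n ≥ 2 and let G = Sol(n−1,d) = F_d/F_d^{(n−1)} with x_i the images of the generators X_i and φ: F_d → G the canonical projection. Then the map D induces a G-equivariant group isomorphism F_d^{(n−1)}/F_d^{(n)} ≅ Z_1(Sol(n−1,d)), and the sequence 1 → F_d^{(n−1)}/F_d^{(n)} → Sol(n,d) → Sol(n−1,d) → 1 is exact with abelian kernel; i.e. the free solvable group Sol(n,d) is an extension of Sol(n−1,d) by the first homology group of the Cayley graph of Sol(n−1,d). -/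
/-- `C1 G d` : edge chains of the right Cayley graph of `G` w.r.t. `d` distinguished
elements; `Finsupp.single (g, i) 1` is the edge from `g` to `g * x i`. -/
abbrev C1 (G : Type*) (d : ℕ) : Type _ := (G × Fin d) →₀ ℤ

/-- `C0 G` : vertex chains, the free abelian group on `G`. -/
abbrev C0 (G : Type*) : Type _ := G →₀ ℤ

/-- The left action of `g : G` on edge chains, `g • δ_{(h,i)} = δ_{(g*h,i)}`. -/
noncomputable def shift {G : Type*} [Group G] (d : ℕ) (g : G) : C1 G d →+ C1 G d :=
  Finsupp.mapDomain.addMonoidHom fun p => (g * p.1, p.2)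

/-- The boundary map `∂ : C1 → C0`, `∂ δ_{(g,i)} = δ_{g * x i} - δ_g`. -/
noncomputable def bd {G : Type*} [Group G] (d : ℕ) (x : Fin d → G) : C1 G d →+ C0 G :=
  Finsupp.liftAddHom fun p =>
    zmultiplesHom (C0 G) (Finsupp.single (p.1 * x p.2) 1 - Finsupp.single p.1 1)

instance derivedSeriesNormal {G : Type*} [Group G] (n : ℕ) : (derivedSeries G n).Normal :=
  derivedSeries_normal G n

/-- `Sol n d`, the free solvable group of degree `n` with `d` generators. -/
abbrev Sol (n d : ℕ) : Type :=
  FreeGroup (Fin d) ⧸ derivedSeries (FreeGroup (Fin d)) n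

/-!
Everything except the last step works for an arbitrary `N ⊴ F = F_d`, with `G = F ⧸ N` and `D` the
Fox derivative. Pick a transversal `t : G → F` (`Quotient.out`); for `g : G` and `v : F` the loop
`t g * v * (t (g v))⁻¹` lies in `N` and has Fox derivative `g • D v + D (t g) - D (t (g v))`.
On `N` the map `D` is additive with values in the cycles `Z_1`.

* Onto `Z_1`: with `ψ δ_g = D (t g)`, every chain `γ` differs from `ψ (∂ γ)` by a combination of the
  Fox derivatives of the loops of the edges, and `ψ (∂ γ) = 0` on a cycle.
* Kernel `⁅N, N⁆`: sending the edge `(g, i)` to the class of its loop in `Nᵃᵇ` is a left inverse of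
  `D` on `N`, because `v ↦ (g ↦ [loop g v])` satisfies the same cocycle rule as `D`.

For `N = F^{(n-1)}` we have `⁅N, N⁆ = F^{(n)}`, so the kernel of `Sol(n) → Sol(n-1)` is abelian.
-/

section Chains

variable {G : Type*} [Group G] {d : ℕ}

lemma shift_single (g : G) (p : G × Fin d) (m : ℤ) :
    shift d g (Finsupp.single p m) = Finsupp.single (g * p.1, p.2) m := by
  simp [shift, Finsupp.mapDomain_single]

lemma shift_one : shift d (1 : G) = AddMonoidHom.id _ :=
  Finsupp.addHom_ext fun p m => by simp [shift_single]

lemma shift_comp_shift (g h : G) : (shift d g).comp (shift d h) = shift d (g * h) :=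
  Finsupp.addHom_ext fun p m => by simp [shift_single, mul_assoc]

lemma shift_shift (g h : G) (γ : C1 G d) : shift d g (shift d h γ) = shift d (g * h) γ :=
  DFunLike.congr_fun (shift_comp_shift g h) γ

lemma bd_single (x : Fin d → G) (p : G × Fin d) (m : ℤ) :
    bd d x (Finsupp.single p m) = m • (Finsupp.single (p.1 * x p.2) 1 - Finsupp.single p.1 1) := by
  simp [bd]

lemma bd_shift (x : Fin d → G) (g : G) (γ : C1 G d) :
    bd d x (shift d g γ) = Finsupp.mapDomain (g * ·) (bd d x γ) := by
  have : (bd d x).comp (shift d g) = (Finsupp.mapDomain.addMonoidHom (g * ·)).comp (bd d x) :=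
    Finsupp.addHom_ext fun p m => by
      simp [shift_single, bd_single, Finsupp.mapDomain_smul, Finsupp.mapDomain_sub,
        Finsupp.mapDomain_single, mul_assoc]
  exact DFunLike.congr_fun this γ

end Chains

section TransversalLoop

variable {d : ℕ} (N : Subgroup (FreeGroup (Fin d))) [N.Normal]

noncomputable def transversalLoop (g : FreeGroup (Fin d) ⧸ N) (v : FreeGroup (Fin d)) : N :=
  ⟨g.out * v * (g * v).out⁻¹, by
    rw [← QuotientGroup.eq_one_iff]
    simp⟩

lemma transversalLoop_one (g : FreeGroup (Fin d) ⧸ N) : transversalLoop N g 1 = 1 :=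
  Subtype.ext <| by simp [transversalLoop]

lemma transversalLoop_mul (g : FreeGroup (Fin d) ⧸ N) (u v : FreeGroup (Fin d)) :
    transversalLoop N g (u * v) = transversalLoop N g u * transversalLoop N (g * u) v :=
  Subtype.ext <| by simp [transversalLoop, mul_assoc]

lemma transversalLoop_inv (g : FreeGroup (Fin d) ⧸ N) (v : FreeGroup (Fin d)) :
    transversalLoop N g v⁻¹ = (transversalLoop N (g * (v : FreeGroup (Fin d) ⧸ N)⁻¹) v)⁻¹ :=
  Subtype.ext <| by simp [transversalLoop, mul_assoc]

lemma abelianization_of_transversalLoop_one {a : FreeGroup (Fin d)} (ha : a ∈ N) :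
    Abelianization.of (transversalLoop N 1 a) = Abelianization.of ⟨a, ha⟩ := by
  set c : N := ⟨(1 : FreeGroup (Fin d) ⧸ N).out, by
    rw [← QuotientGroup.eq_one_iff, QuotientGroup.out_eq']⟩
  have : transversalLoop N 1 a = c * ⟨a, ha⟩ * c⁻¹ :=
    Subtype.ext <| by simp [transversalLoop, c, (QuotientGroup.eq_one_iff a).2 ha]
  rw [this, map_mul, map_mul, map_inv, mul_comm, inv_mul_cancel_left]

noncomputable def loopClass : C1 (FreeGroup (Fin d) ⧸ N) d →+ Additive (Abelianization N) :=
  Finsupp.liftAddHom fun p =>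
    zmultiplesHom _ (.ofMul (Abelianization.of (transversalLoop N p.1 (.of p.2))))

lemma loopClass_single (p : (FreeGroup (Fin d) ⧸ N) × Fin d) :
    loopClass N (Finsupp.single p 1) =
      .ofMul (Abelianization.of (transversalLoop N p.1 (.of p.2))) := by
  simp [loopClass]

end TransversalLoop

section Fox

variable {d : ℕ} {N : Subgroup (FreeGroup (Fin d))} [N.Normal]
  (D : FreeGroup (Fin d) → C1 (FreeGroup (Fin d) ⧸ N) d)
  (hD1 : ∀ i, D (FreeGroup.of i) = Finsupp.single (1, i) 1)
  (hDmul : ∀ u v, D (u * v) = D u + shift d (u : FreeGroup (Fin d) ⧸ N) (D v))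

include hDmul

lemma fox_one : D 1 = 0 := by
  simpa [shift_one] using hDmul 1 1

lemma fox_inv (u : FreeGroup (Fin d)) :
    D u⁻¹ = -shift d (u : FreeGroup (Fin d) ⧸ N)⁻¹ (D u) := by
  have h := hDmul u⁻¹ u
  rw [inv_mul_cancel, fox_one D hDmul, QuotientGroup.mk_inv] at h
  exact eq_neg_of_add_eq_zero_left h.symm

lemma fox_mul_of_mem {a : FreeGroup (Fin d)} (ha : a ∈ N) (b : FreeGroup (Fin d)) :
    D (a * b) = D a + D b := by
  rw [hDmul, (QuotientGroup.eq_one_iff a).2 ha, shift_one, AddMonoidHom.id_apply]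

lemma fox_conj (w : FreeGroup (Fin d)) {a : FreeGroup (Fin d)} (ha : a ∈ N) :
    D (w * a * w⁻¹) = shift d (w : FreeGroup (Fin d) ⧸ N) (D a) := by
  rw [hDmul, hDmul, fox_inv D hDmul, QuotientGroup.mk_mul, (QuotientGroup.eq_one_iff a).2 ha,
    mul_one, map_neg, shift_shift, mul_inv_cancel, shift_one, AddMonoidHom.id_apply]
  abel

lemma fox_transversalLoop (g : FreeGroup (Fin d) ⧸ N) (v : FreeGroup (Fin d)) :
    D (transversalLoop N g v) = shift d g (D v) + D g.out - D (g * v).out := by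
  simp only [transversalLoop]
  rw [hDmul, hDmul, fox_inv D hDmul, QuotientGroup.mk_mul, QuotientGroup.out_eq',
    QuotientGroup.out_eq', map_neg, shift_shift, mul_inv_cancel, shift_one,
    AddMonoidHom.id_apply]
  abel

noncomputable def restrictFox : Additive N →+ C1 (FreeGroup (Fin d) ⧸ N) d where
  toFun a := D a.toMul
  map_zero' := fox_one D hDmul
  map_add' a b := fox_mul_of_mem D hDmul a.toMul.2 b.toMul

lemma fox_eq_zero_of_mem_commutator {a : FreeGroup (Fin d)} (ha : a ∈ ⁅N, N⁆) : D a = 0 := by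
  rw [← N.map_subtype_commutator] at ha
  obtain ⟨b, hb, rfl⟩ := ha
  exact Multiplicative.ofAdd.injective
    (Abelianization.commutator_subset_ker (restrictFox D hDmul).toMultiplicativeRight hb)

include hD1

lemma bd_fox (u : FreeGroup (Fin d)) :
    bd d (fun i => ((FreeGroup.of i : FreeGroup (Fin d)) : FreeGroup (Fin d) ⧸ N)) (D u) =
      Finsupp.single (u : FreeGroup (Fin d) ⧸ N) 1 - Finsupp.single 1 1 := by
  induction u using FreeGroup.induction_on with
  | C1 => simp [fox_one D hDmul]
  | of i => simp [hD1, bd_single]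
  | inv_of i _ => simp [fox_inv D hDmul, hD1, shift_single, bd_single]
  | mul u v hu hv =>
    rw [hDmul, map_add, bd_shift, hv, hu, Finsupp.mapDomain_sub, Finsupp.mapDomain_single,
      Finsupp.mapDomain_single, QuotientGroup.mk_mul, mul_one]
    abel

lemma fox_mem_ker_bd {a : FreeGroup (Fin d)} (ha : a ∈ N) :
    D a ∈ (bd d fun i => ((FreeGroup.of i : FreeGroup (Fin d)) : FreeGroup (Fin d) ⧸ N)).ker := by
  rw [AddMonoidHom.mem_ker, bd_fox D hD1 hDmul, (QuotientGroup.eq_one_iff a).2 ha, sub_self]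

lemma exists_fox_eq_of_mem_ker_bd {γ : C1 (FreeGroup (Fin d) ⧸ N) d}
    (hγ : γ ∈ (bd d fun i => ((FreeGroup.of i : FreeGroup (Fin d)) : FreeGroup (Fin d) ⧸ N)).ker) :
    ∃ a ∈ N, D a = γ := by
  set x : Fin d → FreeGroup (Fin d) ⧸ N := fun i => (FreeGroup.of i : FreeGroup (Fin d))
  let ψ : C0 (FreeGroup (Fin d) ⧸ N) →+ C1 (FreeGroup (Fin d) ⧸ N) d :=
    Finsupp.liftAddHom fun g => zmultiplesHom _ (D g.out)
  have hψ (g) : ψ (Finsupp.single g 1) = D g.out := by simp [ψ]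
  suffices ∀ γ, γ - ψ (bd d x γ) ∈ (restrictFox D hDmul).range by
    obtain ⟨a, ha⟩ := by simpa only [AddMonoidHom.mem_ker.1 hγ, map_zero, sub_zero] using this γ
    exact ⟨a.toMul, a.toMul.2, ha⟩
  intro γ
  induction γ using Finsupp.induction_linear with
  | zero => simp
  | add γ δ hγ hδ => simpa [add_sub_add_comm] using add_mem hγ hδ
  | single p m =>
    have hloop : restrictFox D hDmul (.ofMul (transversalLoop N p.1 (.of p.2))) =
        Finsupp.single p 1 - ψ (bd d x (Finsupp.single p 1)) := by
      rw [bd_single, one_smul, map_sub, hψ, hψ]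
      simp [restrictFox, fox_transversalLoop D hDmul, hD1, shift_single, x]
      abel
    have hm : Finsupp.single p m = m • Finsupp.single p (1 : ℤ) := by simp
    rw [hm, map_zsmul, map_zsmul, ← smul_sub, ← hloop]
    exact zsmul_mem (AddMonoidHom.mem_range.2 ⟨_, rfl⟩) m

lemma loopClass_shift_fox (v : FreeGroup (Fin d)) (g : FreeGroup (Fin d) ⧸ N) :
    loopClass N (shift d g (D v)) = .ofMul (Abelianization.of (transversalLoop N g v)) := by
  have hv : v ∈ Subgroup.closure (Set.range FreeGroup.of) := by
    rw [FreeGroup.closure_range_of]; trivial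
  induction hv using Subgroup.closure_induction generalizing g with
  | mem _ hv =>
    obtain ⟨i, rfl⟩ := hv
    rw [hD1, shift_single, mul_one, loopClass_single]
  | one => simp [fox_one D hDmul, transversalLoop_one]
  | mul u v _ _ hu hv =>
    rw [hDmul, map_add, map_add, shift_shift, hu, hv, transversalLoop_mul, map_mul, ofMul_mul]
  | inv v _ hv =>
    rw [fox_inv D hDmul, map_neg, map_neg, shift_shift, hv, transversalLoop_inv, map_inv, ofMul_inv]

lemma loopClass_fox_of_mem {a : FreeGroup (Fin d)} (ha : a ∈ N) :
    loopClass N (D a) = .ofMul (Abelianization.of ⟨a, ha⟩) := by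
  rw [← abelianization_of_transversalLoop_one N ha, ← loopClass_shift_fox D hD1 hDmul, shift_one,
    AddMonoidHom.id_apply]

lemma fox_eq_zero_iff {a : FreeGroup (Fin d)} (ha : a ∈ N) : D a = 0 ↔ a ∈ ⁅N, N⁆ := by
  refine ⟨fun h => ?_, fox_eq_zero_of_mem_commutator D hDmul⟩
  have : Abelianization.of (⟨a, ha⟩ : N) = 1 := by
    simpa [h] using (loopClass_fox_of_mem D hD1 hDmul ha).symm
  rw [← N.map_subtype_commutator]
  exact ⟨⟨a, ha⟩, (QuotientGroup.eq_one_iff _).1 this, rfl⟩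

end Fox

section Extension

variable {G : Type*} [Group G] {M N : Subgroup G} [M.Normal]

lemma QuotientGroup.ker_map_id [N.Normal] (h : M ≤ N) :
    (QuotientGroup.map M N (MonoidHom.id G) h).ker = N.map (QuotientGroup.mk' M) :=
  (QuotientGroup.ker_map M N (MonoidHom.id G) h).trans (by rw [Subgroup.comap_id])

lemma mul_comm_of_mem_map_mk' (h : ⁅N, N⁆ ≤ M) {a b : G ⧸ M}
    (ha : a ∈ N.map (QuotientGroup.mk' M)) (hb : b ∈ N.map (QuotientGroup.mk' M)) :
    a * b = b * a := by
  have : ⁅N.map (QuotientGroup.mk' M), N.map (QuotientGroup.mk' M)⁆ = ⊥ := by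
    rw [← Subgroup.map_commutator, eq_bot_iff, Subgroup.map_le_iff_le_comap, MonoidHom.comap_bot,
      QuotientGroup.ker_mk']
    exact h
  exact Subgroup.commutator_eq_bot_iff_le_centralizer.1 this hb a ha

end Extension

theorem free_solvable_extension_general {d n : ℕ} (hn : 2 ≤ n)
    (D : FreeGroup (Fin d) → C1 (Sol (n - 1) d) d)
    (hD1 : ∀ i : Fin d,
      D (FreeGroup.of i) = Finsupp.single ((1 : Sol (n - 1) d), i) 1)
    (hDmul : ∀ u v : FreeGroup (Fin d),
      D (u * v) = D u +
        shift d (QuotientGroup.mk' (derivedSeries (FreeGroup (Fin d)) (n - 1)) u) (D v)) :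
    (∀ a ∈ derivedSeries (FreeGroup (Fin d)) (n - 1),
      D a ∈ (bd d fun i => ((QuotientGroup.mk (FreeGroup.of i)) : Sol (n - 1) d)).ker) ∧
    (∀ a b : FreeGroup (Fin d), a ∈ derivedSeries (FreeGroup (Fin d)) (n - 1) →
      b ∈ derivedSeries (FreeGroup (Fin d)) (n - 1) → D (a * b) = D a + D b) ∧
    (∀ γ : C1 (Sol (n - 1) d) d,
      γ ∈ (bd d fun i => ((QuotientGroup.mk (FreeGroup.of i)) : Sol (n - 1) d)).ker →
      ∃ a ∈ derivedSeries (FreeGroup (Fin d)) (n - 1), D a = γ) ∧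
    (∀ a ∈ derivedSeries (FreeGroup (Fin d)) (n - 1),
      (D a = 0 ↔ a ∈ derivedSeries (FreeGroup (Fin d)) n)) ∧
    (∀ (w : FreeGroup (Fin d)), ∀ a ∈ derivedSeries (FreeGroup (Fin d)) (n - 1),
      D (w * a * w⁻¹) =
        shift d (QuotientGroup.mk' (derivedSeries (FreeGroup (Fin d)) (n - 1)) w) (D a)) ∧
    (∃ π : Sol n d →* Sol (n - 1) d,
      (∀ w : FreeGroup (Fin d),
        π (QuotientGroup.mk w) = QuotientGroup.mk w) ∧
      Function.Surjective π ∧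
      π.ker = Subgroup.map (QuotientGroup.mk' (derivedSeries (FreeGroup (Fin d)) n))
        (derivedSeries (FreeGroup (Fin d)) (n - 1)) ∧
      (∀ a b, a ∈ π.ker → b ∈ π.ker → a * b = b * a)) := by
  have hsucc : derivedSeries (FreeGroup (Fin d)) n =
      ⁅derivedSeries (FreeGroup (Fin d)) (n - 1), derivedSeries (FreeGroup (Fin d)) (n - 1)⁆ := by
    rw [← derivedSeries_succ, Nat.sub_add_cancel (by omega)]
  have hle : derivedSeries (FreeGroup (Fin d)) n ≤ derivedSeries (FreeGroup (Fin d)) (n - 1) :=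
    derivedSeries_antitone _ (Nat.sub_le n 1)
  refine ⟨fun a ha => fox_mem_ker_bd D hD1 hDmul ha,
    fun a b ha _ => fox_mul_of_mem D hDmul ha b,
    fun γ hγ => exists_fox_eq_of_mem_ker_bd D hD1 hDmul hγ,
    fun a ha => hsucc ▸ fox_eq_zero_iff D hD1 hDmul ha,
    fun w a ha => fox_conj D hDmul w ha,
    QuotientGroup.map _ _ (MonoidHom.id _) hle, fun w => rfl,
    QuotientGroup.map_surjective_of_surjective _ _ _ QuotientGroup.mk_surjective hle,
    QuotientGroup.ker_map_id hle, ?_⟩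
  rw [QuotientGroup.ker_map_id hle]
  exact fun a b => mul_comm_of_mem_map_mk' hsucc.ge

/-- For `n ≥ 2`, with `G = Sol(n-1,d)`, `φ : F_d → G` the canonical projection and
`x i` the images of the free generators: `D` induces a `G`-equivariant isomorphism
`F_d^{(n-1)}/F_d^{(n)} ≃ Z_1(Cal(Sol(n-1,d)))` (the conjunction of the first five
clauses), and `1 → F_d^{(n-1)}/F_d^{(n)} → Sol(n,d) → Sol(n-1,d) → 1` is exact with
abelian kernel (the final clause); i.e. `Sol(n,d)` is an extension of `Sol(n-1,d)` by
the first homology group of its Cayley graph. -/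
theorem free_solvable_extension {d n : ℕ} (hd : 1 ≤ d) (hn : 2 ≤ n)
    (D : FreeGroup (Fin d) → C1 (Sol (n - 1) d) d)
    (hD1 : ∀ i : Fin d,
      D (FreeGroup.of i) = Finsupp.single ((1 : Sol (n - 1) d), i) 1)
    (hDmul : ∀ u v : FreeGroup (Fin d),
      D (u * v) = D u +
        shift d (QuotientGroup.mk' (derivedSeries (FreeGroup (Fin d)) (n - 1)) u) (D v)) :
    (∀ a ∈ derivedSeries (FreeGroup (Fin d)) (n - 1),
      D a ∈ (bd d fun i => ((QuotientGroup.mk (FreeGroup.of i)) : Sol (n - 1) d)).ker) ∧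
    (∀ a b : FreeGroup (Fin d), a ∈ derivedSeries (FreeGroup (Fin d)) (n - 1) →
      b ∈ derivedSeries (FreeGroup (Fin d)) (n - 1) → D (a * b) = D a + D b) ∧
    (∀ γ : C1 (Sol (n - 1) d) d,
      γ ∈ (bd d fun i => ((QuotientGroup.mk (FreeGroup.of i)) : Sol (n - 1) d)).ker →
      ∃ a ∈ derivedSeries (FreeGroup (Fin d)) (n - 1), D a = γ) ∧
    (∀ a ∈ derivedSeries (FreeGroup (Fin d)) (n - 1),
      (D a = 0 ↔ a ∈ derivedSeries (FreeGroup (Fin d)) n)) ∧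
    (∀ (w : FreeGroup (Fin d)), ∀ a ∈ derivedSeries (FreeGroup (Fin d)) (n - 1),
      D (w * a * w⁻¹) =
        shift d (QuotientGroup.mk' (derivedSeries (FreeGroup (Fin d)) (n - 1)) w) (D a)) ∧
    (∃ π : Sol n d →* Sol (n - 1) d,
      (∀ w : FreeGroup (Fin d),
        π (QuotientGroup.mk w) = QuotientGroup.mk w) ∧
      Function.Surjective π ∧
      π.ker = Subgroup.map (QuotientGroup.mk' (derivedSeries (FreeGroup (Fin d)) n))
        (derivedSeries (FreeGroup (Fin d)) (n - 1)) ∧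
      (∀ a b, a ∈ π.ker → b ∈ π.ker → a * b = b * a)) :=
  free_solvable_extension_general hn D hD1 hDmul
end

section
/- The cycle group Z_1(ℤ^d) = H_1(E^d) is generated as an abelian group by the plaquettes p(m,i,j) with m ∈ ℤ^d and 1 ≤ i < j ≤ d. -/
/-- The lattice `ℤ^d`. -/
abbrev Zd (d : ℕ) : Type := Fin d → ℤ

/-- Edge chains of the grid complex `E^d` (Cayley graph of `ℤ^d`):
`Finsupp.single (m, i) 1` is the edge from `m` to `m + e i`. -/
abbrev C1Z (d : ℕ) : Type := (Zd d × Fin d) →₀ ℤ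

/-- Vertex chains: the free abelian group on `ℤ^d`. -/
abbrev C0Z (d : ℕ) : Type := Zd d →₀ ℤ

/-- The boundary map `∂ δ_{(m,i)} = δ_{m + e i} - δ_m`; its kernel is the cycle group
`Z_1(ℤ^d) = H_1(E^d)`. -/
noncomputable def bdZ (d : ℕ) : C1Z d →+ C0Z d :=
  Finsupp.liftAddHom fun p =>
    zmultiplesHom (C0Z d)
      (Finsupp.single (p.1 + Pi.single p.2 1) 1 - Finsupp.single p.1 1)

/-- The plaquette `p(m,i,j) = δ_{(m,i)} + δ_{(m+e_i,j)} - δ_{(m+e_j,i)} - δ_{(m,j)}`. -/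
noncomputable def plaq (d : ℕ) (m : Zd d) (i j : Fin d) : C1Z d :=
  Finsupp.single (m, i) 1 + Finsupp.single (m + Pi.single i 1, j) 1
    - Finsupp.single (m + Pi.single j 1, i) 1 - Finsupp.single (m, j) 1

/-!
A 1-form on the grid with values in an abelian group `A` that sums to zero around every
plaquette is the coboundary of a function on the vertices (a discrete Poincaré lemma):
integrate it along the staircase path from `0` to `m` that moves along `e₀`, then `e₁`, …;
the plaquette relations let one slide the staircase across a single edge. Applied to the form
that sends an edge to its class in `C₁ / ⟨plaquettes⟩`, this factors the quotient map through
`∂`, so every cycle lies in the subgroup generated by the plaquettes.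
-/

open Finset

section DiscretePrimitive

variable {A : Type*} [AddCommGroup A]

noncomputable def discretePrimitive (a : ℤ → A) (t : ℤ) : A :=
  ∑ s ∈ Ico 0 t, a s - ∑ s ∈ Ico t 0, a s

@[simp]
lemma discretePrimitive_zero (a : ℤ → A) : discretePrimitive a 0 = 0 := by
  simp [discretePrimitive]

lemma discretePrimitive_add_one (a : ℤ → A) (t : ℤ) :
    discretePrimitive a (t + 1) = discretePrimitive a t + a t := by
  rcases le_or_gt 0 t with ht | ht
  · simp [discretePrimitive, ← sum_Ico_add_eq_sum_Ico_add_one ht, Ico_eq_empty_of_le ht,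
      Ico_eq_empty_of_le (by omega : (0 : ℤ) ≤ t + 1)]
  · rw [discretePrimitive, discretePrimitive, ← insert_Ico_add_one_left_eq_Ico ht,
      sum_insert (by simp), Ico_eq_empty_of_le ht.le, Ico_eq_empty_of_le (by omega)]
    abel

lemma discretePrimitive_eq_sub {a g : ℤ → A} (h : ∀ t, a t = g (t + 1) - g t) (t : ℤ) :
    discretePrimitive a t = g t - g 0 := by
  induction t using Int.induction_on with
  | zero => simp
  | succ k ih => rw [discretePrimitive_add_one, ih, h]; abel
  | pred k ih =>
    have hk := discretePrimitive_add_one a (-(k : ℤ) - 1)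
    rw [sub_add_cancel, ih, h, sub_add_cancel] at hk
    rw [eq_sub_of_add_eq hk.symm]
    abel

end DiscretePrimitive

section Poincare

variable {A : Type*} [AddCommGroup A] {d : ℕ}

/-- `ω m i` is the value of the form on the edge from `m` to `m + eᵢ`. -/
def IsClosedOneForm (ω : Zd d → Fin d → A) : Prop :=
  ∀ m i j, i < j → ω m i + ω (m + Pi.single i 1) j = ω (m + Pi.single j 1) i + ω m j

lemma IsClosedOneForm.discretePrimitive_add_single {ω : Zd d → Fin d → A}
    (hω : IsClosedOneForm ω) (b : Zd d) {i j : Fin d} (hij : i < j) (s : ℤ) :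
    discretePrimitive (fun t => ω (b + Pi.single i 1 + t • Pi.single j 1) j) s
      = discretePrimitive (fun t => ω (b + t • Pi.single j 1) j) s
        + ω (b + s • Pi.single j 1) i - ω b i := by
  rw [discretePrimitive_eq_sub (g := fun s =>
    discretePrimitive (fun t => ω (b + t • Pi.single j 1) j) s + ω (b + s • Pi.single j 1) i)]
  · simp
  · intro t
    have hp := hω (b + t • Pi.single j 1) i j hij
    rw [add_right_comm b, add_assoc b (t • _), ← add_one_zsmul] at hp
    rw [discretePrimitive_add_one]
    linear_combination (norm := abel) hp

def truncate (m : Zd d) (k : ℕ) : Zd d := fun t => if (t : ℕ) < k then m t else 0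

lemma truncate_of_le (m : Zd d) {k : ℕ} (hk : d ≤ k) : truncate m k = m := by
  funext t; simp [truncate, t.isLt.trans_le hk]

lemma truncate_add_single_of_le (m : Zd d) {i : Fin d} {k : ℕ} (hk : k ≤ i) :
    truncate (m + Pi.single i 1) k = truncate m k := by
  funext t
  by_cases ht : (t : ℕ) < k
  · have : t ≠ i := by rintro rfl; omega
    simp [truncate, ht, this]
  · simp [truncate, ht]

lemma truncate_add_single_of_lt (m : Zd d) {i : Fin d} {k : ℕ} (hk : (i : ℕ) < k) :
    truncate (m + Pi.single i 1) k = truncate m k + Pi.single i 1 := by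
  funext t
  by_cases ht : (t : ℕ) < k
  · simp [truncate, ht]
  · have : t ≠ i := by rintro rfl; omega
    simp [truncate, ht, this]

lemma truncate_add_one (m : Zd d) {k : ℕ} (hk : k < d) :
    truncate m (k + 1) = truncate m k + m ⟨k, hk⟩ • Pi.single ⟨k, hk⟩ 1 := by
  funext t
  rcases lt_trichotomy (t : ℕ) k with ht | rfl | ht
  · have : t ≠ ⟨k, hk⟩ := by rintro rfl; simp at ht
    simp [truncate, ht, this, Nat.lt_add_one_of_lt ht]
  · simp [truncate]
  · have : t ≠ ⟨k, hk⟩ := by rintro rfl; simp at ht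
    simp [truncate, this, ht.not_gt, (Nat.succ_le_of_lt ht).not_gt]

/-- Integral of `ω` along the staircase from `0` to `truncate m k`. -/
noncomputable def stairPotential (ω : Zd d → Fin d → A) : ℕ → Zd d → A
  | 0, _ => 0
  | k + 1, m => stairPotential ω k m +
      if h : k < d then
        discretePrimitive (fun t => ω (truncate m k + t • Pi.single ⟨k, h⟩ 1) ⟨k, h⟩)
          (m ⟨k, h⟩)
      else 0

lemma stairPotential_add_single_of_le (ω : Zd d → Fin d → A) (m : Zd d) {i : Fin d} {k : ℕ}
    (hk : k ≤ i) : stairPotential ω k (m + Pi.single i 1) = stairPotential ω k m := by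
  induction k with
  | zero => rfl
  | succ k ih =>
    have hki : (⟨k, by omega⟩ : Fin d) ≠ i := by
      intro h
      rw [← h] at hk
      simp at hk
    simp only [stairPotential, ih (by omega), truncate_add_single_of_le m (by omega : k ≤ i),
      dif_pos (by omega : k < d), Pi.add_apply, Pi.single_eq_of_ne hki, add_zero]

lemma IsClosedOneForm.stairPotential_add_single_sub {ω : Zd d → Fin d → A}
    (hω : IsClosedOneForm ω) (m : Zd d) (i : Fin d) {k : ℕ} (hik : (i : ℕ) < k)
    (hkd : k ≤ d) :
    stairPotential ω k (m + Pi.single i 1) - stairPotential ω k m = ω (truncate m k) i := by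
  induction k, hik using Nat.le_induction with
  | base =>
    simp only [stairPotential, stairPotential_add_single_of_le ω m le_rfl, dif_pos i.isLt,
      truncate_add_single_of_le m le_rfl, Pi.add_apply, Pi.single_eq_same,
      discretePrimitive_add_one, truncate_add_one m i.isLt]
    abel
  | succ k hik ih =>
    have hkd' : k < d := hkd
    have hik' : i < (⟨k, hkd'⟩ : Fin d) := hik
    have hki : (⟨k, hkd'⟩ : Fin d) ≠ i := hik'.ne'
    simp only [stairPotential, dif_pos hkd', truncate_add_single_of_lt m hik, Pi.add_apply,
      Pi.single_eq_of_ne hki, add_zero, hω.discretePrimitive_add_single _ hik',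
      truncate_add_one m hkd']
    linear_combination (norm := abel) ih hkd'.le

theorem IsClosedOneForm.exists_potential {ω : Zd d → Fin d → A} (hω : IsClosedOneForm ω) :
    ∃ f : Zd d → A, ∀ m i, f (m + Pi.single i 1) - f m = ω m i :=
  ⟨stairPotential ω d, fun m i => by
    simpa [truncate_of_le m le_rfl] using hω.stairPotential_add_single_sub m i i.isLt le_rfl⟩

end Poincare

section Chains

variable {A : Type*} [AddCommGroup A] {d : ℕ}

lemma bdZ_single (m : Zd d) (i : Fin d) :
    bdZ d (Finsupp.single (m, i) 1)
      = Finsupp.single (m + Pi.single i 1) 1 - Finsupp.single m 1 := by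
  simp [bdZ]

lemma bdZ_plaq (m : Zd d) (i j : Fin d) : bdZ d (plaq d m i j) = 0 := by
  simp only [plaq, map_add, map_sub, bdZ_single, add_right_comm m (Pi.single i 1)]
  abel

lemma isClosedOneForm_comp_single (φ : C1Z d →+ A)
    (hφ : ∀ m i j, i < j → φ (plaq d m i j) = 0) :
    IsClosedOneForm fun m i => φ (Finsupp.single (m, i) 1) := by
  intro m i j hij
  have h := hφ m i j hij
  simp only [plaq, map_add, map_sub] at h
  linear_combination (norm := abel) h

lemma ker_bdZ_le_ker (φ : C1Z d →+ A) (f : Zd d → A)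
    (hf : ∀ m i, f (m + Pi.single i 1) - f m = φ (Finsupp.single (m, i) 1)) :
    (bdZ d).ker ≤ φ.ker := by
  have hφ : φ = (Finsupp.liftAddHom fun m => zmultiplesHom A (f m)).comp (bdZ d) := by
    ext ⟨m, i⟩
    simp only [AddMonoidHom.comp_apply, Finsupp.singleAddHom_apply]
    rw [bdZ_single, map_sub, Finsupp.liftAddHom_apply_single,
      Finsupp.liftAddHom_apply_single, ← hf]
    simp
  intro γ hγ
  rw [AddMonoidHom.mem_ker, hφ, AddMonoidHom.comp_apply, hγ, map_zero]

end Chains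

theorem plaquettes_generate_general {d : ℕ} :
    AddSubgroup.closure
        {γ : C1Z d | ∃ (m : Zd d) (i j : Fin d), i < j ∧ γ = plaq d m i j}
      = (bdZ d).ker := by
  refine le_antisymm ((AddSubgroup.closure_le _).2 ?_) fun γ hγ => ?_
  · rintro _ ⟨m, i, j, -, rfl⟩
    exact bdZ_plaq m i j
  · set H := AddSubgroup.closure
      {γ : C1Z d | ∃ (m : Zd d) (i j : Fin d), i < j ∧ γ = plaq d m i j}
    have hplaq : ∀ m i j, i < j → QuotientAddGroup.mk' H (plaq d m i j) = 0 :=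
      fun m i j hij =>
        (QuotientAddGroup.eq_zero_iff _).2 (AddSubgroup.subset_closure ⟨m, i, j, hij, rfl⟩)
    obtain ⟨f, hf⟩ := (isClosedOneForm_comp_single _ hplaq).exists_potential
    simpa using ker_bdZ_le_ker _ f hf hγ

/-- The cycle group `Z_1(ℤ^d) = H_1(E^d)` is generated, as an abelian group, by the
plaquettes `p(m,i,j)` with `m ∈ ℤ^d` and `i < j`. -/
theorem plaquettes_generate {d : ℕ} (hd : 1 ≤ d) :
    AddSubgroup.closure
        {γ : C1Z d | ∃ (m : Zd d) (i j : Fin d), i < j ∧ γ = plaq d m i j}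
      = (bdZ d).ker :=
  plaquettes_generate_general
end

section
/- For a word w ∈ F_d: w lies in the second derived subgroup F_d″ = [F_d′, F_d′] if and only if D(w) = 0 in C_1(ℤ^d). Equivalently, two words w_1, w_2 ∈ F_d represent the same element of the free metabelian group Met(d) = F_d/F_d″ if and only if their paths on the lattice E^d traverse every edge with the same algebraic multiplicity, i.e. D(w_1) = D(w_2). -/
/-- Translation action of `v ∈ ℤ^d` on edge chains: `v • δ_{(m,i)} = δ_{(m+v,i)}`. -/
noncomputable def shiftZ (d : ℕ) (v : Zd d) : C1Z d →+ C1Z d :=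
  Finsupp.mapDomain.addMonoidHom fun p => (v + p.1, p.2)

/-- The abelianization homomorphism `φ : F_d → ℤ^d`. -/
def phiZ (d : ℕ) : FreeGroup (Fin d) →* Multiplicative (Zd d) :=
  FreeGroup.lift fun i => Multiplicative.ofAdd (Pi.single i 1)

/-!
`D` is a crossed homomorphism for the translation action of `ℤ^d`, pulled back along `φ`, so on
`ker φ = F'` it is a homomorphism to an abelian group and hence kills `F'' = [F', F']`;
moreover `D w₁ = D w₂` iff `D (w₁⁻¹ w₂) = 0`. Conversely, counting the edges of `D w` in each
direction recovers `φ w`, so `D w = 0` forces `w ∈ F'`. With the words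
`p_m = x_1^{m_1} ⋯ x_d^{m_d}`, every lattice edge `(m, i)` gives a loop `p_m x_i p_{m+e_i}⁻¹ ∈ F'`;
as `F'/F''` is abelian these loops extend to a homomorphism `J : C_1(ℤ^d) → F/F''`, and appending
one letter at a time shows `w ≡ J (D w) · p_{φ w}` modulo `F''`. Hence `D w = 0` gives `w ∈ F''`.
-/

open Multiplicative

def IsCrossedHom {G M : Type*} [Group G] [AddCommGroup M] (ρ : G →* AddMonoid.End M)
    (D : G → M) : Prop :=
  ∀ u v, D (u * v) = D u + ρ u (D v)

namespace IsCrossedHom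

variable {G M : Type*} [Group G] [AddCommGroup M] {ρ : G →* AddMonoid.End M} {D : G → M}

theorem map_one (hD : IsCrossedHom ρ D) : D 1 = 0 := by
  have h := hD 1 1
  rw [mul_one, _root_.map_one, AddMonoid.End.coe_one, id] at h
  exact left_eq_add.mp h

theorem map_inv (hD : IsCrossedHom ρ D) (u : G) : D u⁻¹ = -ρ u⁻¹ (D u) := by
  have h := hD u⁻¹ u
  rw [inv_mul_cancel, hD.map_one] at h
  exact eq_neg_of_add_eq_zero_left h.symm

theorem map_inv_mul (hD : IsCrossedHom ρ D) (u v : G) :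
    D (u⁻¹ * v) = ρ u⁻¹ (D v - D u) := by
  rw [hD, hD.map_inv, map_sub]
  abel

theorem map_inv_mul_eq_zero_iff (hD : IsCrossedHom ρ D) (u v : G) :
    D (u⁻¹ * v) = 0 ↔ D u = D v := by
  have hρ : Function.LeftInverse (ρ u) (ρ u⁻¹) := fun m => by
    rw [← Function.comp_apply (f := ρ u), ← AddMonoid.End.coe_mul, ← _root_.map_mul,
      mul_inv_cancel, _root_.map_one, AddMonoid.End.coe_one, id]
  rw [hD.map_inv_mul, ← map_zero (ρ u⁻¹), hρ.injective.eq_iff, sub_eq_zero, eq_comm]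

theorem map_mul_of_mem_ker (hD : IsCrossedHom ρ D) {u : G} (hu : u ∈ ρ.ker) (v : G) :
    D (u * v) = D u + D v := by
  rw [hD, hu, AddMonoid.End.coe_one, id]

theorem map_inv_of_mem_ker (hD : IsCrossedHom ρ D) {u : G} (hu : u ∈ ρ.ker) :
    D u⁻¹ = -D u := by
  rw [hD.map_inv, inv_mem hu, AddMonoid.End.coe_one, id]

def ker (hD : IsCrossedHom ρ D) : Subgroup G where
  carrier := {g | D g = 0}
  one_mem' := hD.map_one
  mul_mem' {u v} (hu : D u = 0) (hv : D v = 0) := show D (u * v) = 0 by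
    rw [hD, hu, hv, map_zero, add_zero]
  inv_mem' {u} (hu : D u = 0) := show D u⁻¹ = 0 by
    rw [hD.map_inv, hu, map_zero, neg_zero]

theorem mem_ker (hD : IsCrossedHom ρ D) {g : G} : g ∈ hD.ker ↔ D g = 0 := Iff.rfl

theorem commutator_ker_le (hD : IsCrossedHom ρ D) : ⁅ρ.ker, ρ.ker⁆ ≤ hD.ker := by
  rw [Subgroup.commutator_le]
  intro g hg h hh
  rw [mem_ker, commutatorElement_def, mul_assoc, mul_assoc, hD.map_mul_of_mem_ker hg,
    hD.map_mul_of_mem_ker hh, hD.map_mul_of_mem_ker (inv_mem hg), hD.map_inv_of_mem_ker hg,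
    hD.map_inv_of_mem_ker hh]
  abel

def homOfInvariant (hD : IsCrossedHom ρ D) {N : Type*} [AddCommGroup N] (f : M →+ N)
    (hf : ∀ g m, f (ρ g m) = f m) : G →* Multiplicative N where
  toFun g := ofAdd (f (D g))
  map_one' := by rw [hD.map_one, map_zero, ofAdd_zero]
  map_mul' u v := by rw [hD, map_add, hf, ofAdd_add]

theorem homOfInvariant_apply (hD : IsCrossedHom ρ D) {N : Type*} [AddCommGroup N] (f : M →+ N)
    (hf : ∀ g m, f (ρ g m) = f m) (g : G) : hD.homOfInvariant f hf g = ofAdd (f (D g)) := rfl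

end IsCrossedHom

theorem MonoidHom.eq_of_map_mul_right {G H : Type*} [Group G] [Group H] {s : Set G}
    (hs : Subgroup.closure s = ⊤) (f : G →* H) {R : G → H} (h1 : R 1 = 1)
    (hmul : ∀ u, ∀ x ∈ s, R (u * x) = R u * f x) : R = f := by
  funext g
  induction (hs ▸ Subgroup.mem_top g : g ∈ Subgroup.closure s) using
    Subgroup.closure_induction_right with
  | one => rw [h1, map_one]
  | mul_right u _ x hx ih => rw [hmul u x hx, ih, map_mul]
  | mul_inv_cancel u _ x hx ih =>
    have h := hmul (u * x⁻¹) x hx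
    rw [inv_mul_cancel_right, ih] at h
    rw [map_mul, map_inv, h, mul_inv_cancel_right]

instance Subgroup.isMulCommutative_map_mk'_commutator {G : Type*} [Group G] (H : Subgroup G)
    [H.Normal] : IsMulCommutative (H.map (QuotientGroup.mk' ⁅H, H⁆)) := by
  rw [← Subgroup.commutator_self_eq_bot_iff, ← Subgroup.map_commutator, Subgroup.map_eq_bot_iff,
    QuotientGroup.ker_mk']

section Lattice

variable {d : ℕ}

theorem shiftZ_single (v m : Zd d) (i : Fin d) (n : ℤ) :
    shiftZ d v (Finsupp.single (m, i) n) = Finsupp.single (v + m, i) n := by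
  simp [shiftZ, Finsupp.mapDomain_single]

noncomputable def shiftHom (d : ℕ) : Multiplicative (Zd d) →* AddMonoid.End (C1Z d) where
  toFun v := shiftZ d (toAdd v)
  map_one' := by
    ext c : 1
    simp only [shiftZ, toAdd_one, zero_add]
    exact Finsupp.mapDomain_id
  map_mul' u v := by
    ext c : 1
    change Finsupp.mapDomain _ c = Finsupp.mapDomain _ (Finsupp.mapDomain _ c)
    rw [← Finsupp.mapDomain_comp]
    simp only [toAdd_mul, add_assoc, Function.comp_def]

theorem shiftHom_apply (v : Multiplicative (Zd d)) (c : C1Z d) :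
    shiftHom d v c = shiftZ d (toAdd v) c := rfl

theorem phiZ_of (i : Fin d) : phiZ d (FreeGroup.of i) = ofAdd (Pi.single i 1) :=
  FreeGroup.lift_apply_of

noncomputable def edgeSum (d : ℕ) : C1Z d →+ Zd d :=
  Finsupp.liftAddHom fun q => AddMonoidHom.single (fun _ => ℤ) q.2

theorem edgeSum_single (m : Zd d) (i : Fin d) (n : ℤ) :
    edgeSum d (Finsupp.single (m, i) n) = Pi.single i n :=
  Finsupp.liftAddHom_apply_single _ _ _

theorem edgeSum_shiftZ (v : Zd d) (c : C1Z d) : edgeSum d (shiftZ d v c) = edgeSum d c := by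
  induction c using Finsupp.induction_linear with
  | zero => rw [map_zero, map_zero]
  | add f g hf hg => rw [map_add, map_add, hf, hg, map_add]
  | single q n => rw [shiftZ_single, edgeSum_single, edgeSum_single]

theorem edgeSum_shiftHom (v : Multiplicative (Zd d)) (c : C1Z d) :
    edgeSum d (shiftHom d v c) = edgeSum d c :=
  edgeSum_shiftZ _ c

theorem edgeSum_eq_phiZ {D : FreeGroup (Fin d) → C1Z d}
    (hD : IsCrossedHom ((shiftHom d).comp (phiZ d)) D)
    (hD1 : ∀ i : Fin d, D (FreeGroup.of i) = Finsupp.single ((0 : Zd d), i) 1)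
    (w : FreeGroup (Fin d)) : edgeSum d (D w) = toAdd (phiZ d w) := by
  have h : hD.homOfInvariant (edgeSum d) (fun _ _ => edgeSum_shiftHom _ _) = phiZ d :=
    FreeGroup.ext_hom _ _ fun i => by
      rw [hD.homOfInvariant_apply, hD1, edgeSum_single, phiZ_of]
  exact congrArg toAdd (DFunLike.congr_fun h w)

theorem phiZ_eq_one_of_eq_zero {D : FreeGroup (Fin d) → C1Z d}
    (hD : IsCrossedHom ((shiftHom d).comp (phiZ d)) D)
    (hD1 : ∀ i : Fin d, D (FreeGroup.of i) = Finsupp.single ((0 : Zd d), i) 1)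
    {w : FreeGroup (Fin d)} (hw : D w = 0) : phiZ d w = 1 := by
  rw [← ofAdd_toAdd (phiZ d w), ← edgeSum_eq_phiZ hD hD1, hw, map_zero, ofAdd_zero]

theorem ker_phiZ : (phiZ d).ker = commutator (FreeGroup (Fin d)) := by
  classical
  refine le_antisymm (fun w hw => ?_) (Abelianization.commutator_subset_ker _)
  let ψ : Multiplicative (Zd d) →* Abelianization (FreeGroup (Fin d)) :=
    AddMonoidHom.toMultiplicativeLeft (Fintype.linearCombination ℤ
      fun i => Additive.ofMul (Abelianization.of (FreeGroup.of i))).toAddMonoidHom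
  have hψ : ψ.comp (phiZ d) = Abelianization.of := FreeGroup.ext_hom _ _ fun i => by
    simp [ψ, phiZ_of, Fintype.linearCombination_apply_single]
  rw [← Abelianization.ker_of, ← hψ]
  exact MonoidHom.mem_ker.mpr (by rw [MonoidHom.comp_apply, hw, map_one])

theorem commutator_le_ker_shiftHom_comp_phiZ :
    commutator (FreeGroup (Fin d)) ≤ ((shiftHom d).comp (phiZ d)).ker := by
  rw [← ker_phiZ, ← MonoidHom.comap_ker]
  exact MonoidHom.ker_le_comap _ _

def latticeWord (v : Zd d) : FreeGroup (Fin d) :=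
  (List.ofFn fun i => FreeGroup.of i ^ v i).prod

theorem latticeWord_zero : latticeWord (0 : Zd d) = 1 := by
  simp [latticeWord]

theorem phiZ_latticeWord (v : Zd d) : phiZ d (latticeWord v) = ofAdd v := by
  classical
  simp only [latticeWord, map_list_prod, List.map_ofFn, Function.comp_def, map_zpow, phiZ_of,
    List.prod_ofFn, ← ofAdd_zsmul, ← ofAdd_sum, ← Pi.single_smul', smul_eq_mul, mul_one]
  rw [Finset.univ_sum_single]

def edgeLoop (q : Zd d × Fin d) : FreeGroup (Fin d) :=
  latticeWord q.1 * FreeGroup.of q.2 * (latticeWord (q.1 + Pi.single q.2 1))⁻¹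

theorem edgeLoop_mem_commutator (q : Zd d × Fin d) :
    edgeLoop q ∈ commutator (FreeGroup (Fin d)) := by
  rw [← ker_phiZ, MonoidHom.mem_ker, edgeLoop, map_mul, map_mul, map_inv, phiZ_latticeWord,
    phiZ_of, phiZ_latticeWord, ← ofAdd_add, ← ofAdd_neg, ← ofAdd_add, ofAdd_eq_one]
  abel

open scoped IsMulCommutative in
noncomputable def edgeLoopProd (d : ℕ) : Multiplicative (C1Z d) →*
    FreeGroup (Fin d) ⧸ ⁅commutator (FreeGroup (Fin d)), commutator (FreeGroup (Fin d))⁆ :=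
  let A := (commutator (FreeGroup (Fin d))).map (QuotientGroup.mk' _)
  A.subtype.comp <| AddMonoidHom.toMultiplicativeLeft <|
    Finsupp.liftAddHom fun q => zmultiplesHom (Additive A) <| Additive.ofMul
      ⟨_, Subgroup.mem_map_of_mem (QuotientGroup.mk' _) (edgeLoop_mem_commutator q)⟩

theorem edgeLoopProd_single (q : Zd d × Fin d) :
    edgeLoopProd d (ofAdd (Finsupp.single q 1)) = edgeLoop q := by
  simp [edgeLoopProd]

theorem mk_eq_edgeLoopProd_mul {D : FreeGroup (Fin d) → C1Z d}
    (hD : IsCrossedHom ((shiftHom d).comp (phiZ d)) D)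
    (hD1 : ∀ i : Fin d, D (FreeGroup.of i) = Finsupp.single ((0 : Zd d), i) 1)
    (w : FreeGroup (Fin d)) :
    (w : FreeGroup (Fin d) ⧸ ⁅commutator (FreeGroup (Fin d)), commutator (FreeGroup (Fin d))⁆) =
      edgeLoopProd d (ofAdd (D w)) * latticeWord (toAdd (phiZ d w)) := by
  suffices (fun w => edgeLoopProd d (ofAdd (D w)) * (latticeWord (toAdd (phiZ d w)) :
      FreeGroup (Fin d) ⧸ _)) = QuotientGroup.mk'
        ⁅commutator (FreeGroup (Fin d)), commutator (FreeGroup (Fin d))⁆ from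
    (congrFun this w).symm
  refine MonoidHom.eq_of_map_mul_right (FreeGroup.closure_range_of _) _ ?_ ?_
  · rw [hD.map_one, ofAdd_zero, map_one, map_one, toAdd_one, latticeWord_zero,
      QuotientGroup.mk_one, mul_one]
  · rintro u _ ⟨i, rfl⟩
    rw [hD, hD1, MonoidHom.comp_apply, shiftHom_apply, shiftZ_single, add_zero, ofAdd_add,
      map_mul, edgeLoopProd_single, map_mul, phiZ_of, toAdd_mul, toAdd_ofAdd, mul_assoc,
      mul_assoc, ← QuotientGroup.mk_mul, edgeLoop, inv_mul_cancel_right, QuotientGroup.mk'_apply,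
      QuotientGroup.mk_mul]

end Lattice

theorem metabelian_path_criterion_general {d : ℕ}
    (D : FreeGroup (Fin d) → C1Z d)
    (hD1 : ∀ i : Fin d, D (FreeGroup.of i) = Finsupp.single ((0 : Zd d), i) 1)
    (hDmul : ∀ u v : FreeGroup (Fin d),
      D (u * v) = D u + shiftZ d (Multiplicative.toAdd (phiZ d u)) (D v)) :
    (∀ w : FreeGroup (Fin d),
      w ∈ (⁅commutator (FreeGroup (Fin d)), commutator (FreeGroup (Fin d))⁆ :
        Subgroup (FreeGroup (Fin d))) ↔ D w = 0) ∧
    (∀ w₁ w₂ : FreeGroup (Fin d),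
      (QuotientGroup.mk w₁ : FreeGroup (Fin d) ⧸
          (⁅commutator (FreeGroup (Fin d)), commutator (FreeGroup (Fin d))⁆ :
            Subgroup (FreeGroup (Fin d)))) = QuotientGroup.mk w₂ ↔
        D w₁ = D w₂) := by
  have hD : IsCrossedHom ((shiftHom d).comp (phiZ d)) D := hDmul
  have mem_iff (w : FreeGroup (Fin d)) :
      w ∈ ⁅commutator (FreeGroup (Fin d)), commutator (FreeGroup (Fin d))⁆ ↔ D w = 0 := by
    refine ⟨fun hw => ?_, fun hw => ?_⟩
    · exact hD.commutator_ker_le (Subgroup.commutator_mono commutator_le_ker_shiftHom_comp_phiZ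
        commutator_le_ker_shiftHom_comp_phiZ hw)
    · rw [← QuotientGroup.eq_one_iff, mk_eq_edgeLoopProd_mul hD hD1, hw,
        phiZ_eq_one_of_eq_zero hD hD1 hw, ofAdd_zero, map_one, toAdd_one, latticeWord_zero,
        QuotientGroup.mk_one, mul_one]
  exact ⟨mem_iff, fun w₁ w₂ => by rw [QuotientGroup.eq, mem_iff, hD.map_inv_mul_eq_zero_iff]⟩

/-- A word `w ∈ F_d` lies in the second derived subgroup `F_d'' = [F_d', F_d']` iff
`D w = 0`; equivalently, two words represent the same element of the free metabelian
group `Met(d) = F_d/F_d''` iff their paths on the lattice `E^d` traverse every edge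
with the same algebraic multiplicity, i.e. `D w₁ = D w₂`. -/
theorem metabelian_path_criterion {d : ℕ} (hd : 1 ≤ d)
    (D : FreeGroup (Fin d) → C1Z d)
    (hD1 : ∀ i : Fin d, D (FreeGroup.of i) = Finsupp.single ((0 : Zd d), i) 1)
    (hDmul : ∀ u v : FreeGroup (Fin d),
      D (u * v) = D u + shiftZ d (Multiplicative.toAdd (phiZ d u)) (D v)) :
    (∀ w : FreeGroup (Fin d),
      w ∈ (⁅commutator (FreeGroup (Fin d)), commutator (FreeGroup (Fin d))⁆ :
        Subgroup (FreeGroup (Fin d))) ↔ D w = 0) ∧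
    (∀ w₁ w₂ : FreeGroup (Fin d),
      (QuotientGroup.mk w₁ : FreeGroup (Fin d) ⧸
          (⁅commutator (FreeGroup (Fin d)), commutator (FreeGroup (Fin d))⁆ :
            Subgroup (FreeGroup (Fin d)))) = QuotientGroup.mk w₂ ↔
        D w₁ = D w₂) :=
  metabelian_path_criterion_general D hD1 hDmul
end
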